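/- arXiv:1304.3522 — 9 statements merged into one kernel-verified Lean document; each statement's English description precedes it below -/
import Mathlib

section
/- Let (a_m) be a real sequence. Then sup_m 5^m |5 a_{m+1} - 3 a_m| < ∞ if and only if there exist a constant A and a sequence (a'_m) with a_m = A (3/5)^m + a'_m and sup_m 5^m |a'_m| < ∞. Moreover, one can choose a'_m so that sup_m 5^m |a'_m| ≤ sup_m 5^m |5 a_{m+1} - 3 a_m|, and then A = lim_{m→∞} (5/3)^m a_m. -/
/-!
With `b_m = (5/3)^m a_m`, the increment `b_{m+1} - b_m = (5/3)^m (5 a_{m+1} - 3 a_m) / 3` is at most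
`C 3^{-m} / 3`, so `b` is Cauchy with limit `A` and `|b_m - A| ≤ C 3^{-m} / 2`; multiplying back,
`a'_m = a_m - A (3/5)^m` satisfies `5^m |a'_m| ≤ C / 2`. Conversely the term `A (3/5)^m` is killed by
`5 a_{m+1} - 3 a_m`, so only `a'` contributes, and its weighted bound passes to the difference.
-/

open Filter Topology

section TwistedDifference

variable {p q r C : ℝ} {a : ℕ → ℝ}

theorem exists_tendsto_of_weighted_twisted_diff_le (hp : 0 < p) (hq : 0 < q) (hqr : q < p * r)
    (h : ∀ m, r ^ m * |q * a (m + 1) - p * a m| ≤ C) :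
    ∃ A, Tendsto (fun m ↦ (q / p) ^ m * a m) atTop (𝓝 A) ∧
      ∀ m, r ^ m * |a m - A * (p / q) ^ m| ≤ r * C / (p * r - q) := by
  have hr : 0 < r := pos_of_mul_pos_right (hq.trans hqr) hp.le
  set ρ := q / (p * r) with hρ
  have hρ0 : 0 < ρ := by positivity
  have hρ1 : ρ < 1 := (div_lt_one (by positivity)).2 hqr
  set b : ℕ → ℝ := fun m ↦ (q / p) ^ m * a m
  have hb : ∀ m, (q / p) ^ m = ρ ^ m * r ^ m := fun m ↦ by
    rw [← mul_pow, hρ]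
    field_simp
  have hstep : ∀ m, dist (b m) (b (m + 1)) ≤ C / p * ρ ^ m := fun m ↦ by
    have hdiff : b (m + 1) - b m = ρ ^ m / p * (r ^ m * (q * a (m + 1) - p * a m)) := by
      have hq' : ρ * r * p = q := by rw [hρ]; field_simp
      simp only [b, hb, pow_succ]
      field_simp
      linear_combination a (m + 1) * hq'
    calc dist (b m) (b (m + 1)) = ρ ^ m / p * (r ^ m * |q * a (m + 1) - p * a m|) := by
          rw [dist_comm, Real.dist_eq, hdiff, abs_mul, abs_mul, abs_of_pos (by positivity),
            abs_of_pos (by positivity)]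
      _ ≤ ρ ^ m / p * C := by gcongr; exact h m
      _ = C / p * ρ ^ m := by ring
  obtain ⟨A, hA⟩ := cauchySeq_tendsto_of_complete (cauchySeq_of_le_geometric _ _ hρ1 hstep)
  refine ⟨A, hA, fun m ↦ ?_⟩
  have hdist := dist_le_of_le_geometric_of_tendsto _ _ hρ1 hstep hA m
  rw [Real.dist_eq] at hdist
  have hbA : b m - A = ρ ^ m * (r ^ m * (a m - A * (p / q) ^ m)) := by
    simp only [b, ← mul_assoc, ← hb, div_pow]
    field_simp
  calc r ^ m * |a m - A * (p / q) ^ m| = |b m - A| / ρ ^ m := by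
        rw [hbA, abs_mul, abs_mul, abs_of_pos (pow_pos hρ0 m), abs_of_pos (pow_pos hr m)]
        field_simp
    _ ≤ C / p * ρ ^ m / (1 - ρ) / ρ ^ m := by gcongr
    _ = r * C / (p * r - q) := by
      rw [div_right_comm, mul_div_cancel_right₀ _ (by positivity), hρ]
      field_simp

theorem weighted_twisted_diff_le_of_eq_add {A l : ℝ} {a' : ℕ → ℝ} (hr : 0 < r)
    (hl : q * l = p) (ha : ∀ m, a m = A * l ^ m + a' m) (h : ∀ m, r ^ m * |a' m| ≤ C) (m : ℕ) :
    r ^ m * |q * a (m + 1) - p * a m| ≤ (|q| / r + |p|) * C := by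
  have hdiff : q * a (m + 1) - p * a m = q * a' (m + 1) - p * a' m := by
    rw [ha, ha, ← hl, pow_succ]
    ring
  calc r ^ m * |q * a (m + 1) - p * a m|
      ≤ r ^ m * (|q| * |a' (m + 1)| + |p| * |a' m|) := by
        rw [hdiff, ← abs_mul, ← abs_mul]
        gcongr
        exact abs_sub _ _
    _ = |q| / r * (r ^ (m + 1) * |a' (m + 1)|) + |p| * (r ^ m * |a' m|) := by
        rw [pow_succ]
        field_simp
    _ ≤ (|q| / r + |p|) * C := by
        rw [add_mul]
        gcongr
        exacts [h _, h _]

end TwistedDifference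

/-- sup_m 5^m |5 a_{m+1} - 3 a_m| < ∞ iff a_m = A (3/5)^m + a'_m with
sup_m 5^m |a'_m| < ∞; moreover the choice can respect the same bound, and then
A = lim (5/3)^m a_m. -/
theorem stmt0 (a : ℕ → ℝ) :
    ((∃ C : ℝ, ∀ m : ℕ, (5:ℝ)^m * |5 * a (m+1) - 3 * a m| ≤ C) ↔
      ∃ (A : ℝ) (a' : ℕ → ℝ), (∀ m : ℕ, a m = A * ((3:ℝ)/5)^m + a' m) ∧
        ∃ C : ℝ, ∀ m : ℕ, (5:ℝ)^m * |a' m| ≤ C) ∧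
    (∀ C : ℝ, (∀ m : ℕ, (5:ℝ)^m * |5 * a (m+1) - 3 * a m| ≤ C) →
      ∃ (A : ℝ) (a' : ℕ → ℝ), (∀ m : ℕ, a m = A * ((3:ℝ)/5)^m + a' m) ∧
        (∀ m : ℕ, (5:ℝ)^m * |a' m| ≤ C) ∧
        Filter.Tendsto (fun m : ℕ => ((5:ℝ)/3)^m * a m) Filter.atTop (nhds A)) := by
  have decompose : ∀ C : ℝ, (∀ m : ℕ, (5:ℝ)^m * |5 * a (m+1) - 3 * a m| ≤ C) →
      ∃ (A : ℝ) (a' : ℕ → ℝ), (∀ m : ℕ, a m = A * ((3:ℝ)/5)^m + a' m) ∧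
        (∀ m : ℕ, (5:ℝ)^m * |a' m| ≤ C) ∧
        Tendsto (fun m : ℕ => ((5:ℝ)/3)^m * a m) atTop (𝓝 A) := fun C hC ↦ by
    obtain ⟨A, hA, hbound⟩ :=
      exists_tendsto_of_weighted_twisted_diff_le (by norm_num) (by norm_num) (by norm_num) hC
    have hC0 : 0 ≤ C := le_trans (by positivity) (hC 0)
    refine ⟨A, fun m ↦ a m - A * (3 / 5) ^ m, fun m ↦ by ring, fun m ↦ (hbound m).trans ?_, hA⟩
    norm_num
    linarith
  refine ⟨⟨fun ⟨C, hC⟩ ↦ ?_, fun ⟨A, a', ha, C, hC⟩ ↦ ?_⟩, decompose⟩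
  · obtain ⟨A, a', ha, hbound, -⟩ := decompose C hC
    exact ⟨A, a', ha, C, hbound⟩
  · exact ⟨_, weighted_twisted_diff_le_of_eq_add (by norm_num) (by norm_num) ha hC⟩
end

section
/- Fix a real constant 0 < r < 1 and a real sequence (a_m)_{m≥1}. If Σ_m r^m (a_{m+1} - a_m)^2 < ∞, then Σ_m r^m a_m^2 < ∞, and moreover there exist constants C_1, C_2 (depending only on r) with Σ_m r^m a_m^2 ≤ C_1 a_1^2 + C_2 Σ_m r^m (a_{m+1} - a_m)^2. Conversely, if Σ_m r^m a_m^2 < ∞ then Σ_m r^m (a_{m+1} - a_m)^2 < ∞. -/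
/-!
With `b m = r^m a_m²` and `g m = r^m (a_{m+1} - a_m)²`, Young's inequality
`r (x + y)² ≤ (1+r)/2 · x² + r(1+r)/(1-r) · y²` gives the contraction
`b (m+1) ≤ t · b m + K · g m` with `t = (1+r)/2 < 1`, `K = r(1+r)/(1-r)`; summing it bounds the partial sums of `b`
by `(r a₁² + K ∑ g) / (1 - t)`. The converse is `(x - y)² ≤ 2x² + 2y²`.
-/

open Finset

lemma mul_add_sq_le {r : ℝ} (hr1 : r < 1) (x y : ℝ) :
    r * (x + y) ^ 2 ≤ (1 + r) / 2 * x ^ 2 + r * (1 + r) / (1 - r) * y ^ 2 := by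
  have h1r : 0 < 1 - r := sub_pos.2 hr1
  have key : (1 + r) / 2 * x ^ 2 + r * (1 + r) / (1 - r) * y ^ 2 - r * (x + y) ^ 2
      = ((1 - r) * x - 2 * r * y) ^ 2 / (2 * (1 - r)) := by
    field_simp
    ring
  rw [← sub_nonneg, key]
  positivity

theorem summable_and_tsum_le_of_le_mul_add {b g : ℕ → ℝ} {t K : ℝ}
    (hb : ∀ m, 0 ≤ b m) (hg : ∀ m, 0 ≤ g m) (hgs : Summable g) (ht : t < 1) (hK : 0 ≤ K)
    (hrec : ∀ m, b (m + 1) ≤ t * b m + K * g m) :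
    Summable b ∧ ∑' m, b m ≤ (b 0 + K * ∑' m, g m) / (1 - t) := by
  have hpartial : ∀ N, ∑ m ∈ range N, b m ≤ (b 0 + K * ∑' m, g m) / (1 - t) := by
    intro N
    rw [le_div_iff₀ (sub_pos.2 ht)]
    have hshift : ∑ m ∈ range (N + 1), b m
        ≤ b 0 + (t * ∑ m ∈ range N, b m + K * ∑ m ∈ range N, g m) := by
      rw [sum_range_succ', add_comm, mul_sum, mul_sum, ← sum_add_distrib]
      gcongr with m
      exact hrec m
    have hmono : ∑ m ∈ range N, b m ≤ ∑ m ∈ range (N + 1), b m := by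
      rw [sum_range_succ]
      exact le_add_of_nonneg_right (hb N)
    have hG : K * ∑ m ∈ range N, g m ≤ K * ∑' m, g m :=
      mul_le_mul_of_nonneg_left (hgs.sum_le_tsum _ fun m _ => hg m) hK
    linarith
  have hbs : Summable b := summable_of_sum_range_le hb hpartial
  exact ⟨hbs, hbs.tsum_le_of_sum_range_le hpartial⟩

theorem Summable.mul_sub_sq_of_le_mul_succ {w x : ℕ → ℝ} {c : ℝ} (hw : ∀ m, 0 ≤ w m)
    (hwc : ∀ m, w m ≤ c * w (m + 1)) (h : Summable fun m => w m * x m ^ 2) :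
    Summable fun m => w m * (x (m + 1) - x m) ^ 2 := by
  refine (((summable_nat_add_iff 1).2 h).mul_left (2 * c) |>.add (h.mul_left 2)).of_nonneg_of_le
    (fun m => mul_nonneg (hw m) (sq_nonneg _)) fun m => ?_
  have hsq : (x (m + 1) - x m) ^ 2 ≤ 2 * x (m + 1) ^ 2 + 2 * x m ^ 2 := by
    nlinarith [sq_nonneg (x (m + 1) + x m)]
  calc w m * (x (m + 1) - x m) ^ 2 ≤ w m * (2 * x (m + 1) ^ 2 + 2 * x m ^ 2) :=
        mul_le_mul_of_nonneg_left hsq (hw m)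
    _ ≤ c * w (m + 1) * (2 * x (m + 1) ^ 2) + w m * (2 * x m ^ 2) := by
        rw [mul_add]
        gcongr
        exact hwc m
    _ = 2 * c * (w (m + 1) * x (m + 1) ^ 2) + 2 * (w m * x m ^ 2) := by ring

/-- for 0 < r < 1, summability of r^m (a_{m+1}-a_m)^2 (m ≥ 1) implies
summability of r^m a_m^2 with an explicit bound (constants depending only on r),
and conversely. -/
theorem stmt2 (r : ℝ) (hr0 : 0 < r) (hr1 : r < 1) :
    ∃ C₁ C₂ : ℝ, ∀ a : ℕ → ℝ,
      ((Summable (fun m : ℕ => r^(m+1) * (a (m+2) - a (m+1))^2) →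
        Summable (fun m : ℕ => r^(m+1) * (a (m+1))^2) ∧
        (∑' m : ℕ, r^(m+1) * (a (m+1))^2) ≤
          C₁ * (a 1)^2 + C₂ * ∑' m : ℕ, r^(m+1) * (a (m+2) - a (m+1))^2) ∧
      (Summable (fun m : ℕ => r^(m+1) * (a (m+1))^2) →
        Summable (fun m : ℕ => r^(m+1) * (a (m+2) - a (m+1))^2))) := by
  have hK : 0 ≤ r * (1 + r) / (1 - r) := div_nonneg (by positivity) (sub_pos.2 hr1).le
  refine ⟨r / (1 - (1 + r) / 2), r * (1 + r) / (1 - r) / (1 - (1 + r) / 2), fun a =>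
    ⟨fun hgs => ?_, fun hbs => ?_⟩⟩
  · have hrec (m : ℕ) : r ^ (m + 2) * a (m + 2) ^ 2 ≤ (1 + r) / 2 * (r ^ (m + 1) * a (m + 1) ^ 2)
        + r * (1 + r) / (1 - r) * (r ^ (m + 1) * (a (m + 2) - a (m + 1)) ^ 2) := by
      calc r ^ (m + 2) * a (m + 2) ^ 2
          = r ^ (m + 1) * (r * (a (m + 1) + (a (m + 2) - a (m + 1))) ^ 2) := by ring
        _ ≤ r ^ (m + 1) * ((1 + r) / 2 * a (m + 1) ^ 2
              + r * (1 + r) / (1 - r) * (a (m + 2) - a (m + 1)) ^ 2) :=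
          mul_le_mul_of_nonneg_left (mul_add_sq_le hr1 _ _) (by positivity)
        _ = _ := by ring
    obtain ⟨hbs, hle⟩ := summable_and_tsum_le_of_le_mul_add
      (b := fun m => r ^ (m + 1) * a (m + 1) ^ 2) (t := (1 + r) / 2) (fun m => by positivity)
      (fun m => by positivity) hgs (by linarith) hK hrec
    refine ⟨hbs, hle.trans_eq ?_⟩
    ring
  · exact hbs.mul_sub_sq_of_le_mul_succ (x := fun m => a (m + 1)) (c := r⁻¹) (fun m => by positivity)
      fun m => le_of_eq <| by field_simp; ring
end

section
/- Fix a real constant r > 1 and a real sequence (a_m). Then Σ_m r^m (a_{m+1} - a_m)^2 < ∞ if and only if there exist a constant A and a sequence (a'_m) with a_m = A + a'_m and Σ_m r^m (a'_m)^2 < ∞. Moreover one can take A = lim_{m→∞} a_m, and there is a constant C (depending only on r) with Σ_m r^m (a_m - A)^2 ≤ C Σ_m r^m (a_{m+1} - a_m)^2. -/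
/-- Cauchy–Schwarz inequality for infinite sums of nonnegative reals. -/
private lemma tsum_cauchy_schwarz (f g : ℕ → ℝ) (hf0 : ∀ n, 0 ≤ f n) (hg0 : ∀ n, 0 ≤ g n)
    (hf : Summable (fun n => f n ^ 2)) (hg : Summable (fun n => g n ^ 2)) :
    (∑' n, f n * g n) ^ 2 ≤ (∑' n, f n ^ 2) * (∑' n, g n ^ 2) := by
  have hfg : Summable (fun n => f n * g n) := by
    apply Summable.of_nonneg_of_le (fun n => mul_nonneg (hf0 n) (hg0 n))
      (fun n => ?_) (hf.add hg)
    nlinarith [sq_nonneg (f n - g n), mul_nonneg (hf0 n) (hg0 n)]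
  have hP : 0 ≤ ∑' n, f n ^ 2 := tsum_nonneg (fun n => sq_nonneg _)
  have hQ : 0 ≤ ∑' n, g n ^ 2 := tsum_nonneg (fun n => sq_nonneg _)
  have key : ∀ N : ℕ, ∑ n ∈ Finset.range N, f n * g n ≤
      Real.sqrt ((∑' n, f n ^ 2) * (∑' n, g n ^ 2)) := by
    intro N
    have h1 := Finset.sum_mul_sq_le_sq_mul_sq (Finset.range N) f g
    have h2 : ∑ n ∈ Finset.range N, f n ^ 2 ≤ ∑' n, f n ^ 2 :=
      Summable.sum_le_tsum _ (fun i _ => sq_nonneg _) hf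
    have h3 : ∑ n ∈ Finset.range N, g n ^ 2 ≤ ∑' n, g n ^ 2 :=
      Summable.sum_le_tsum _ (fun i _ => sq_nonneg _) hg
    have h4 : (∑ n ∈ Finset.range N, f n * g n) ^ 2 ≤ (∑' n, f n ^ 2) * (∑' n, g n ^ 2) :=
      h1.trans (mul_le_mul h2 h3 (Finset.sum_nonneg fun i _ => sq_nonneg _) hP)
    have h5 : 0 ≤ ∑ n ∈ Finset.range N, f n * g n :=
      Finset.sum_nonneg fun i _ => mul_nonneg (hf0 i) (hg0 i)
    nlinarith [Real.sq_sqrt (mul_nonneg hP hQ),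
      Real.sqrt_nonneg ((∑' n, f n ^ 2) * (∑' n, g n ^ 2))]
  have h6 : ∑' n, f n * g n ≤ Real.sqrt ((∑' n, f n ^ 2) * (∑' n, g n ^ 2)) :=
    Summable.tsum_le_of_sum_range_le hfg key
  have h7 : 0 ≤ ∑' n, f n * g n := tsum_nonneg fun n => mul_nonneg (hf0 n) (hg0 n)
  nlinarith [Real.sq_sqrt (mul_nonneg hP hQ),
    Real.sqrt_nonneg ((∑' n, f n ^ 2) * (∑' n, g n ^ 2))]

private lemma aux_arith {x X X' Y Z : ℝ} (h2 : 2*x ≤ X + Y) (h4 : Y ≤ Z) (h0 : 0 ≤ x)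
    (hX : 0 ≤ X') (hZ : 0 ≤ Z) (h5 : X = X') : x ≤ X' + Z := by linarith

/-- for r > 1, Σ r^m (a_{m+1}-a_m)^2 < ∞ iff a_m = A + a'_m with
Σ r^m (a'_m)^2 < ∞; moreover A = lim a_m and the bound holds with C depending only on r. -/
theorem stmt3 (r : ℝ) (hr : 1 < r) :
    ∃ C : ℝ, ∀ a : ℕ → ℝ,
      ((Summable (fun m : ℕ => r^(m+1) * (a (m+2) - a (m+1))^2) ↔
        ∃ (A : ℝ) (a' : ℕ → ℝ), (∀ m : ℕ, a m = A + a' m) ∧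
          Summable (fun m : ℕ => r^(m+1) * (a' (m+1))^2)) ∧
      (Summable (fun m : ℕ => r^(m+1) * (a (m+2) - a (m+1))^2) →
        ∃ A : ℝ, Filter.Tendsto a Filter.atTop (nhds A) ∧
          Summable (fun m : ℕ => r^(m+1) * (a (m+1) - A)^2) ∧
          (∑' m : ℕ, r^(m+1) * (a (m+1) - A)^2) ≤
            C * ∑' m : ℕ, r^(m+1) * (a (m+2) - a (m+1))^2)) := by
  have hr0 : (0:ℝ) < r := lt_trans one_pos hr
  set s := Real.sqrt r with hs_def
  have hs1 : 1 < s := by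
    rw [hs_def, show (1:ℝ) = Real.sqrt 1 from (Real.sqrt_one).symm]
    exact Real.sqrt_lt_sqrt (by norm_num) hr
  have hs0 : 0 < s := lt_trans one_pos hs1
  have hsr : s * s = r := Real.mul_self_sqrt hr0.le
  have hsltr : s ≤ r := by nlinarith
  have hsinv : s⁻¹ < 1 := inv_lt_one_of_one_lt₀ hs1
  have hsinv0 : (0:ℝ) ≤ s⁻¹ := inv_nonneg.mpr hs0.le
  set K : ℝ := (1 - s⁻¹)⁻¹ with hK_def
  have hK0 : 0 < K := inv_pos.mpr (sub_pos.mpr hsinv)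
  have hgeo : Summable (fun j : ℕ => (s⁻¹)^j) := summable_geometric_of_lt_one hsinv0 hsinv
  have hgeo_sum : ∑' j : ℕ, (s⁻¹)^j = K := tsum_geometric_of_lt_one hsinv0 hsinv
  have hsq : ∀ p : ℕ, Real.sqrt ((s⁻¹)^p) * Real.sqrt (s^p) = 1 := by
    intro p
    rw [← Real.sqrt_mul (pow_nonneg hsinv0 p), ← mul_pow, inv_mul_cancel₀ hs0.ne',
      one_pow, Real.sqrt_one]
  refine ⟨K^2, fun a => ?_⟩
  have main : Summable (fun m : ℕ => r^(m+1) * (a (m+2) - a (m+1))^2) →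
      ∃ A : ℝ, Filter.Tendsto a Filter.atTop (nhds A) ∧
        Summable (fun m : ℕ => r^(m+1) * (a (m+1) - A)^2) ∧
        (∑' m : ℕ, r^(m+1) * (a (m+1) - A)^2) ≤
          K^2 * ∑' m : ℕ, r^(m+1) * (a (m+2) - a (m+1))^2 := by
    intro hG
    set c : ℕ → ℝ := fun m => a (m+1) with hc_def
    set d : ℕ → ℝ := fun m => c (m+1) - c m with hd_def
    set G : ℕ → ℝ := fun m => r^(m+1) * d m ^ 2 with hG_def
    have hGsum : Summable G := hG
    have hGnn : ∀ m, 0 ≤ G m := fun m => mul_nonneg (pow_nonneg hr0.le _) (sq_nonneg _)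
    set V : ℝ := ∑' i, G i with hV_def
    have hVnn : 0 ≤ V := tsum_nonneg hGnn
    have hGle : ∀ k, G k ≤ V := fun k => Summable.le_tsum hGsum k (fun j _ => hGnn j)
    have hsle : ∀ m : ℕ, s ^ (m+1) ≤ r ^ (m+1) := fun m => pow_le_pow_left₀ hs0.le hsltr _
    -- summability of |d|
    have habs : Summable (fun m => |d m|) := by
      apply Summable.of_nonneg_of_le (fun m => abs_nonneg _) (fun m => ?_)
        ((hgeo.mul_right s⁻¹).add hGsum)
      show |d m| ≤ s⁻¹ ^ m * s⁻¹ + G m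
      have h2 := two_mul_le_add_sq (Real.sqrt ((s⁻¹)^(m+1))) (Real.sqrt (s^(m+1)) * |d m|)
      have e1 : Real.sqrt ((s⁻¹)^(m+1)) * (Real.sqrt (s^(m+1)) * |d m|) = |d m| := by
        rw [← mul_assoc, hsq, one_mul]
      have e2 : (Real.sqrt ((s⁻¹)^(m+1)))^2 = (s⁻¹)^(m+1) :=
        Real.sq_sqrt (pow_nonneg hsinv0 _)
      have e3 : (Real.sqrt (s^(m+1)) * |d m|)^2 = s^(m+1) * d m ^ 2 := by
        rw [mul_pow, Real.sq_sqrt (pow_nonneg hs0.le _), sq_abs]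
      rw [mul_assoc, e1] at h2
      rw [e2, e3] at h2
      have h4 : s^(m+1) * d m ^ 2 ≤ G m :=
        mul_le_mul_of_nonneg_right (hsle m) (sq_nonneg _)
      have h5 : (s⁻¹)^(m+1) = (s⁻¹)^m * s⁻¹ := pow_succ _ _
      have habs0 : (0:ℝ) ≤ |d m| := abs_nonneg _
      exact aux_arith h2 h4 habs0 (mul_nonneg (pow_nonneg hsinv0 m) hsinv0) (hGnn m) h5
    have hd : Summable d := habs.of_abs
    -- the limit A
    have hps : Filter.Tendsto (fun n => ∑ i ∈ Finset.range n, d i) Filter.atTop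
        (nhds (∑' i, d i)) := hd.hasSum.tendsto_sum_nat
    have htel : ∀ n, ∑ i ∈ Finset.range n, d i = c n - c 0 := fun n =>
      Finset.sum_range_sub c n
    set A : ℝ := c 0 + ∑' i, d i with hA_def
    have hcA : Filter.Tendsto c Filter.atTop (nhds A) := by
      have h := hps.add_const (c 0)
      simp only [htel, sub_add_cancel] at h
      rw [hA_def, add_comm]
      exact h
    -- tail identity
    have htail : ∀ n : ℕ, A - c n = ∑' j, d (j + n) := by
      intro n
      have hsn : Summable (fun j => d (j + n)) := (summable_nat_add_iff n).mpr hd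
      have h1 : Filter.Tendsto (fun m => ∑ j ∈ Finset.range m, d (j + n)) Filter.atTop
          (nhds (∑' j, d (j + n))) := hsn.hasSum.tendsto_sum_nat
      have h2 : ∀ m, ∑ j ∈ Finset.range m, d (j + n) = c (m + n) - c n := by
        intro m
        have ht := Finset.sum_range_sub (fun j => c (j + n)) m
        simp only [Nat.zero_add] at ht
        rw [← ht]
        apply Finset.sum_congr rfl
        intro j _
        rw [hd_def]
        simp only
        have hj : j + 1 + n = j + n + 1 := by omega
        rw [hj]
      have h3 : Filter.Tendsto (fun m : ℕ => c (m + n)) Filter.atTop (nhds A) :=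
        hcA.comp (Filter.tendsto_add_atTop_nat n)
      have h4 : Filter.Tendsto (fun m => ∑ j ∈ Finset.range m, d (j + n)) Filter.atTop
          (nhds (A - c n)) := by
        simp only [h2]
        exact h3.sub_const (c n)
      exact tendsto_nhds_unique h4 h1
    -- the weighted tail sums
    have hW : ∀ n : ℕ, Summable (fun j => (s⁻¹)^j * G (j + n)) := by
      intro n
      apply Summable.of_nonneg_of_le (fun j => mul_nonneg (pow_nonneg hsinv0 _) (hGnn _))
        (fun j => mul_le_mul_of_nonneg_left (hGle _) (pow_nonneg hsinv0 _))
        (hgeo.mul_right V)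
    -- the key pointwise estimate
    have hkey : ∀ n : ℕ, r^(n+1) * (c n - A)^2 ≤ K * ∑' j, (s⁻¹)^j * G (j + n) := by
      intro n
      set f : ℕ → ℝ := fun j => Real.sqrt ((r⁻¹)^(n+1) * (s⁻¹)^j) with hf_def
      set g : ℕ → ℝ := fun j => Real.sqrt (r^(n+1) * s^j) * |d (j + n)| with hg_def
      have hrinv0 : (0:ℝ) ≤ r⁻¹ := inv_nonneg.mpr hr0.le
      have hfg : ∀ j, f j * g j = |d (j + n)| := by
        intro j
        rw [hf_def, hg_def]
        simp only
        rw [← mul_assoc, ← Real.sqrt_mul (mul_nonneg (pow_nonneg hrinv0 _) (pow_nonneg hsinv0 _))]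
        have hone : (r⁻¹)^(n+1) * (s⁻¹)^j * (r^(n+1) * s^j) = 1 := by
          rw [inv_pow, inv_pow]
          field_simp
        rw [hone, Real.sqrt_one, one_mul]
      have hf2 : ∀ j, f j ^ 2 = (r⁻¹)^(n+1) * (s⁻¹)^j := fun j =>
        Real.sq_sqrt (mul_nonneg (pow_nonneg hrinv0 _) (pow_nonneg hsinv0 _))
      have hg2 : ∀ j, g j ^ 2 = (s⁻¹)^j * G (j + n) := by
        intro j
        rw [hg_def]
        simp only
        rw [mul_pow, Real.sq_sqrt (mul_nonneg (pow_nonneg hr0.le _) (pow_nonneg hs0.le _)),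
          sq_abs, hG_def]
        simp only
        have hpow : (s⁻¹)^j * r^(j+n+1) = r^(n+1) * s^j := by
          have h1 : s⁻¹ * r = s := by
            rw [← hsr, ← mul_assoc, inv_mul_cancel₀ hs0.ne', one_mul]
          have h2 : j + n + 1 = j + (n + 1) := by omega
          rw [h2, pow_add, ← mul_assoc, ← mul_pow, h1, mul_comm]
        rw [← mul_assoc, ← hpow]
      have hsf : Summable (fun j => f j ^ 2) := by
        simp_rw [hf2]
        exact hgeo.mul_left _
      have hsg : Summable (fun j => g j ^ 2) := by
        simp_rw [hg2]
        exact hW n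
      have hcs := tsum_cauchy_schwarz f g (fun j => Real.sqrt_nonneg _)
        (fun j => mul_nonneg (Real.sqrt_nonneg _) (abs_nonneg _)) hsf hsg
      have htt : ∑' j, f j * g j = ∑' j, |d (j + n)| := tsum_congr hfg
      have habsn : Summable (fun j => |d (j + n)|) :=
        (summable_nat_add_iff (f := fun m => |d m|) n).mpr habs
      have hbound : |c n - A| ≤ ∑' j, f j * g j := by
        rw [htt]
        have h1 : |c n - A| = ‖∑' j, d (j + n)‖ := by
          rw [← htail n, abs_sub_comm]
          simp [Real.norm_eq_abs]
        rw [h1]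
        have := norm_tsum_le_tsum_norm (f := fun j => d (j + n)) (by simpa [Real.norm_eq_abs] using habsn)
        simpa [Real.norm_eq_abs] using this
      have hfsum : ∑' j, f j ^ 2 = (r⁻¹)^(n+1) * K := by
        simp_rw [hf2]
        rw [tsum_mul_left, hgeo_sum]
      have h2 : (∑' j, f j * g j)^2 ≤ ((r⁻¹)^(n+1) * K) * ∑' j, (s⁻¹)^j * G (j+n) := by
        calc (∑' j, f j * g j)^2 ≤ (∑' j, f j ^ 2) * (∑' j, g j ^ 2) := hcs
          _ = ((r⁻¹)^(n+1) * K) * ∑' j, (s⁻¹)^j * G (j+n) := by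
              rw [hfsum]
              congr 1
              exact tsum_congr hg2
      have h3 : (c n - A)^2 ≤ ((r⁻¹)^(n+1) * K) * ∑' j, (s⁻¹)^j * G (j+n) := by
        have h4 : (c n - A)^2 ≤ (∑' j, f j * g j)^2 := by
          rw [← sq_abs (c n - A)]
          exact pow_le_pow_left₀ (abs_nonneg _) hbound 2
        exact h4.trans h2
      calc r^(n+1) * (c n - A)^2
          ≤ r^(n+1) * (((r⁻¹)^(n+1) * K) * ∑' j, (s⁻¹)^j * G (j+n)) :=
            mul_le_mul_of_nonneg_left h3 (pow_nonneg hr0.le _)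
        _ = K * ∑' j, (s⁻¹)^j * G (j+n) := by
            rw [← mul_assoc, ← mul_assoc, ← mul_pow, mul_inv_cancel₀ hr0.ne', one_pow, one_mul]
    -- summing the key estimate
    have hfin : ∀ N : ℕ, ∑ n ∈ Finset.range N, r^(n+1) * (c n - A)^2 ≤ K^2 * V := by
      intro N
      have h1 : ∑ n ∈ Finset.range N, r^(n+1) * (c n - A)^2
          ≤ ∑ n ∈ Finset.range N, K * ∑' j, (s⁻¹)^j * G (j + n) :=
        Finset.sum_le_sum (fun n _ => hkey n)
      have h2 : ∑ n ∈ Finset.range N, K * ∑' j, (s⁻¹)^j * G (j + n)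
          = K * ∑' j, ∑ n ∈ Finset.range N, (s⁻¹)^j * G (j + n) := by
        rw [← Finset.mul_sum]
        congr 1
        exact (Summable.tsum_finsetSum (fun n _ => hW n)).symm
      have h3 : ∀ j : ℕ, ∑ n ∈ Finset.range N, (s⁻¹)^j * G (j + n) ≤ (s⁻¹)^j * V := by
        intro j
        rw [← Finset.mul_sum]
        refine mul_le_mul_of_nonneg_left ?_ (pow_nonneg hsinv0 _)
        have hinj : ∀ x ∈ Finset.range N, ∀ y ∈ Finset.range N,
            j + x = j + y → x = y := fun x _ y _ h => by omega
        calc ∑ n ∈ Finset.range N, G (j + n)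
            = ∑ k ∈ (Finset.range N).image (fun n => j + n), G k :=
              (Finset.sum_image hinj).symm
          _ ≤ V := Summable.sum_le_tsum _ (fun i _ => hGnn i) hGsum
      have hLsum : Summable (fun j => ∑ n ∈ Finset.range N, (s⁻¹)^j * G (j + n)) := by
        apply Summable.of_nonneg_of_le
          (fun j => Finset.sum_nonneg (fun n _ => mul_nonneg (pow_nonneg hsinv0 _) (hGnn _)))
          h3 (hgeo.mul_right V)
      have h4 : ∑' j, ∑ n ∈ Finset.range N, (s⁻¹)^j * G (j + n) ≤ ∑' j, (s⁻¹)^j * V :=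
        Summable.tsum_le_tsum h3 hLsum (hgeo.mul_right V)
      have h5 : ∑' j : ℕ, (s⁻¹)^j * V = K * V := by
        rw [tsum_mul_right, hgeo_sum]
      calc ∑ n ∈ Finset.range N, r^(n+1) * (c n - A)^2
          ≤ K * ∑' j, ∑ n ∈ Finset.range N, (s⁻¹)^j * G (j + n) := by rw [← h2]; exact h1
        _ ≤ K * (K * V) := mul_le_mul_of_nonneg_left (h4.trans (le_of_eq h5)) hK0.le
        _ = K^2 * V := by ring
    have hnn2 : ∀ n : ℕ, 0 ≤ r^(n+1) * (c n - A)^2 := fun n =>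
      mul_nonneg (pow_nonneg hr0.le _) (sq_nonneg _)
    have hsum2 : Summable (fun n => r^(n+1) * (c n - A)^2) :=
      summable_of_sum_range_le hnn2 hfin
    exact ⟨A, (Filter.tendsto_add_atTop_iff_nat 1).mp hcA, hsum2,
      Real.tsum_le_of_sum_range_le hnn2 hfin⟩
  constructor
  · constructor
    · intro h
      obtain ⟨A, _, hS, _⟩ := main h
      exact ⟨A, fun m => a m - A, fun m => by ring, hS⟩
    · rintro ⟨A, a', ha, hS⟩
      have hshift : Summable (fun m => r^(m+2) * (a' (m+2))^2) :=
        (summable_nat_add_iff (f := fun m => r^(m+1) * (a' (m+1))^2) 1).mpr hS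
      apply Summable.of_nonneg_of_le
        (fun m => mul_nonneg (pow_nonneg hr0.le _) (sq_nonneg _)) (fun m => ?_)
        ((hshift.mul_left 2).add (hS.mul_left 2))
      have heq : a (m+2) - a (m+1) = a' (m+2) - a' (m+1) := by rw [ha, ha]; ring
      rw [heq]
      have h1 : (a' (m+2) - a' (m+1))^2 ≤ 2 * a' (m+2)^2 + 2 * a' (m+1)^2 := by
        nlinarith [sq_nonneg (a' (m+2) + a' (m+1))]
      have h2 : r^(m+1) ≤ r^(m+2) := pow_le_pow_right₀ hr.le (by omega)
      have h3 : (0:ℝ) < r^(m+1) := pow_pos hr0 _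
      nlinarith [mul_le_mul_of_nonneg_left h1 h3.le,
        mul_le_mul_of_nonneg_right h2 (sq_nonneg (a' (m+2)))]
  · exact main
end

section
/- Let (a_m) be a real sequence. Then Σ_m (25/3)^m (5 a_{m+2} - 8 a_{m+1} + 3 a_m)^2 < ∞ if and only if there exist constants A_1, A_2 and a sequence (a'_m) with a_m = A_1 + A_2 (3/5)^m + a'_m and Σ_m (25/3)^m (a'_m)^2 < ∞. Moreover there is an absolute constant C with Σ_m (25/3)^m (a'_m)^2 ≤ C Σ_m (25/3)^m (5 a_{m+2} - 8 a_{m+1} + 3 a_m)^2, and then A_1 = lim_{m→∞} a_m and A_2 = lim_{m→∞} (5/3)^m (a_m - A_1). -/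
/-!
With the shift `S a_n = a_{n+1}` the operator factors as `5S² - 8S + 3 = (3 - 5S)(1 - S)`.
On sequences with `∑ w^n u_n² < ∞` the factor `1 - cS` is inverted by the tail sum
`u_n = ∑_k c^k f_{n+k}`, and this inverse is bounded as soon as `c² < w` (a discrete Hardy
inequality: Cauchy–Schwarz against `ρ^k`, then summing the resulting geometric series in the
shifted weight). With `w = 25/3` both `c = 1` and `c = 5/3` qualify, so inverting both factors
gives a particular solution `a'` of the recurrence in the weighted space; `a - a'` solves the
homogeneous recurrence and is therefore `A₁ + A₂ (3/5)^n`. Conversely the operator is bounded on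
the weighted space, and square summability against `(25/3)^n` forces `(5/3)^n a'_n → 0`, which
identifies `A₁` and `A₂` as the stated limits.
-/

open Filter Topology

section CauchySchwarz

variable {ι : Type*} {r p q : ι → ℝ}

lemma summable_of_sq_le_mul (hp : ∀ i, 0 ≤ p i) (hq : ∀ i, 0 ≤ q i)
    (hr : ∀ i, r i ^ 2 ≤ p i * q i) (sp : Summable p) (sq : Summable q) : Summable r := by
  refine Summable.of_norm_bounded ((sp.add sq).div_const 2) fun i => ?_
  have := hp i
  have := hq i
  refine abs_le_of_sq_le_sq ?_ (by positivity)
  nlinarith [hr i, sq_nonneg (p i - q i)]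

lemma sq_tsum_le_tsum_mul_tsum (hp : ∀ i, 0 ≤ p i) (hq : ∀ i, 0 ≤ q i)
    (hr : ∀ i, r i ^ 2 ≤ p i * q i) (sp : Summable p) (sq : Summable q) :
    (∑' i, r i) ^ 2 ≤ (∑' i, p i) * ∑' i, q i := by
  have hlim : Tendsto (fun s : Finset ι => (∑ i ∈ s, r i) ^ 2) atTop (𝓝 ((∑' i, r i) ^ 2)) :=
    (summable_of_sq_le_mul hp hq hr sp sq).hasSum.pow 2
  refine le_of_tendsto' hlim fun s => ?_
  calc (∑ i ∈ s, r i) ^ 2 ≤ (∑ i ∈ s, p i) * ∑ i ∈ s, q i :=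
        Finset.sum_sq_le_sum_mul_sum_of_sq_le_mul s (fun i _ => hp i) (fun i _ => hq i)
          fun i _ => hr i
    _ ≤ (∑' i, p i) * ∑' i, q i :=
        mul_le_mul (sp.sum_le_tsum s fun i _ => hp i) (sq.sum_le_tsum s fun i _ => hq i)
          (Finset.sum_nonneg fun i _ => hq i) (tsum_nonneg hp)

end CauchySchwarz

section GeometricShift

variable {g : ℕ → ℝ} {q : ℝ}

lemma summable_geometric_mul_shift (hg0 : ∀ n, 0 ≤ g n) (hg : Summable g) (hq0 : 0 ≤ q)
    (hq1 : q ≤ 1) (m : ℕ) : Summable fun k => q ^ k * g (m + k) := by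
  refine Summable.of_nonneg_of_le (fun k => mul_nonneg (pow_nonneg hq0 k) (hg0 _))
    (fun k => mul_le_of_le_one_left (hg0 _) (pow_le_one₀ hq0 hq1)) ?_
  simpa only [add_comm m] using (summable_nat_add_iff m).mpr hg

lemma sum_shift_le_tsum (hg0 : ∀ n, 0 ≤ g n) (hg : Summable g) (k N : ℕ) :
    ∑ m ∈ Finset.range N, g (m + k) ≤ ∑' n, g n := by
  rw [← hg.sum_add_tsum_nat_add k]
  refine le_add_of_nonneg_of_le (Finset.sum_nonneg fun n _ => hg0 n) ?_
  exact ((summable_nat_add_iff k).mpr hg).sum_le_tsum _ fun n _ => hg0 _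

lemma sum_range_tsum_geometric_mul_shift_le (hg0 : ∀ n, 0 ≤ g n) (hg : Summable g)
    (hq0 : 0 ≤ q) (hq1 : q < 1) (N : ℕ) :
    ∑ m ∈ Finset.range N, ∑' k, q ^ k * g (m + k) ≤ (1 - q)⁻¹ * ∑' n, g n := by
  have hgeom := summable_geometric_of_lt_one hq0 hq1
  have hinner (k : ℕ) : q ^ k * ∑ m ∈ Finset.range N, g (m + k) ≤ q ^ k * ∑' n, g n :=
    mul_le_mul_of_nonneg_left (sum_shift_le_tsum hg0 hg k N) (pow_nonneg hq0 k)
  calc ∑ m ∈ Finset.range N, ∑' k, q ^ k * g (m + k)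
      = ∑' k, q ^ k * ∑ m ∈ Finset.range N, g (m + k) := by
        rw [← Summable.tsum_finsetSum fun m _ =>
          summable_geometric_mul_shift hg0 hg hq0 hq1.le m]
        simp only [Finset.mul_sum]
    _ ≤ ∑' k, q ^ k * ∑' n, g n := by
        refine Summable.tsum_le_tsum hinner ?_ (hgeom.mul_right _)
        exact (hgeom.mul_right _).of_nonneg_of_le (fun k => mul_nonneg (pow_nonneg hq0 k)
          (Finset.sum_nonneg fun _ _ => hg0 _)) hinner
    _ = (1 - q)⁻¹ * ∑' n, g n := by rw [tsum_mul_right, tsum_geometric_of_lt_one hq0 hq1]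

lemma summable_tsum_geometric_mul_shift (hg0 : ∀ n, 0 ≤ g n) (hg : Summable g)
    (hq0 : 0 ≤ q) (hq1 : q < 1) : Summable fun m => ∑' k, q ^ k * g (m + k) :=
  summable_of_sum_range_le (fun _ => tsum_nonneg fun k => mul_nonneg (pow_nonneg hq0 k) (hg0 _))
    (sum_range_tsum_geometric_mul_shift_le hg0 hg hq0 hq1)

lemma tsum_tsum_geometric_mul_shift_le (hg0 : ∀ n, 0 ≤ g n) (hg : Summable g)
    (hq0 : 0 ≤ q) (hq1 : q < 1) : ∑' m, ∑' k, q ^ k * g (m + k) ≤ (1 - q)⁻¹ * ∑' n, g n :=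
  Real.tsum_le_of_sum_range_le
    (fun _ => tsum_nonneg fun k => mul_nonneg (pow_nonneg hq0 k) (hg0 _))
    (sum_range_tsum_geometric_mul_shift_le hg0 hg hq0 hq1)

end GeometricShift

noncomputable def tailSum (c : ℝ) (f : ℕ → ℝ) (m : ℕ) : ℝ := ∑' k, c ^ k * f (m + k)

lemma tailSum_eq_add {c : ℝ} {f : ℕ → ℝ} {m : ℕ} (hs : Summable fun k => c ^ k * f (m + k)) :
    tailSum c f m = f m + c * tailSum c f (m + 1) := by
  rw [tailSum, hs.tsum_eq_zero_add, tailSum, ← tsum_mul_left]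
  simp only [pow_zero, one_mul, add_zero, pow_succ', mul_assoc, ← add_assoc, add_right_comm m 1]

section WeightedTail

variable {w c ρ : ℝ} {f : ℕ → ℝ}

lemma sq_pow_mul_eq (hρ : ρ ≠ 0) (k : ℕ) (x : ℝ) :
    (c ^ k * x) ^ 2 = ρ ^ k * ((c ^ 2 / ρ) ^ k * x ^ 2) := by
  rw [div_pow, mul_pow, ← pow_mul, mul_comm k 2, pow_mul]
  field_simp

lemma summable_div_pow_mul_sq_shift (hw : 0 < w) (hρ : 0 < ρ) (hcw : c ^ 2 ≤ ρ * w)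
    (hf : Summable fun n => w ^ n * f n ^ 2) (m : ℕ) :
    Summable fun k => (c ^ 2 / ρ) ^ k * f (m + k) ^ 2 := by
  have hq1 : c ^ 2 / (ρ * w) ≤ 1 := div_le_one_of_le₀ hcw (by positivity)
  refine ((summable_geometric_mul_shift (fun n => by positivity) hf (by positivity) hq1
    m).mul_left (w ^ m)⁻¹).congr fun k => ?_
  rw [pow_add, div_pow, div_pow, mul_pow]
  field_simp

lemma summable_tailSum_terms (hw : 0 < w) (hρ0 : 0 < ρ) (hρ1 : ρ < 1) (hcw : c ^ 2 ≤ ρ * w)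
    (hf : Summable fun n => w ^ n * f n ^ 2) (m : ℕ) :
    Summable fun k => c ^ k * f (m + k) :=
  summable_of_sq_le_mul (fun k => by positivity) (fun k => by positivity)
    (fun k => (sq_pow_mul_eq hρ0.ne' k _).le) (summable_geometric_of_lt_one hρ0.le hρ1)
    (summable_div_pow_mul_sq_shift hw hρ0 hcw hf m)

lemma pow_mul_sq_tailSum_le (hw : 0 < w) (hρ0 : 0 < ρ) (hρ1 : ρ < 1) (hcw : c ^ 2 ≤ ρ * w)
    (hf : Summable fun n => w ^ n * f n ^ 2) (m : ℕ) :
    w ^ m * tailSum c f m ^ 2 ≤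
      (1 - ρ)⁻¹ * ∑' k, (c ^ 2 / (ρ * w)) ^ k * (w ^ (m + k) * f (m + k) ^ 2) := by
  have hcs : tailSum c f m ^ 2 ≤ (∑' k, ρ ^ k) * ∑' k, (c ^ 2 / ρ) ^ k * f (m + k) ^ 2 :=
    sq_tsum_le_tsum_mul_tsum (fun k => by positivity) (fun k => by positivity)
      (fun k => (sq_pow_mul_eq hρ0.ne' k _).le) (summable_geometric_of_lt_one hρ0.le hρ1)
      (summable_div_pow_mul_sq_shift hw hρ0 hcw hf m)
  have hweight : ∀ k, w ^ m * ((c ^ 2 / ρ) ^ k * f (m + k) ^ 2) =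
      (c ^ 2 / (ρ * w)) ^ k * (w ^ (m + k) * f (m + k) ^ 2) := fun k => by
    rw [pow_add, div_pow, div_pow, mul_pow]
    field_simp
  calc w ^ m * tailSum c f m ^ 2
      ≤ w ^ m * ((1 - ρ)⁻¹ * ∑' k, (c ^ 2 / ρ) ^ k * f (m + k) ^ 2) := by
        rw [← tsum_geometric_of_lt_one hρ0.le hρ1]
        exact mul_le_mul_of_nonneg_left hcs (by positivity)
    _ = (1 - ρ)⁻¹ * ∑' k, (c ^ 2 / (ρ * w)) ^ k * (w ^ (m + k) * f (m + k) ^ 2) := by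
        rw [mul_left_comm, ← tsum_mul_left]
        simp only [hweight]

theorem summable_pow_mul_sq_tailSum (hw : 0 < w) (hρ0 : 0 < ρ) (hρ1 : ρ < 1)
    (hcw : c ^ 2 < ρ * w) (hf : Summable fun n => w ^ n * f n ^ 2) :
    Summable fun m => w ^ m * tailSum c f m ^ 2 :=
  ((summable_tsum_geometric_mul_shift (fun n => by positivity) hf (by positivity)
    ((div_lt_one (by positivity)).2 hcw)).mul_left _).of_nonneg_of_le (fun m => by positivity)
    (pow_mul_sq_tailSum_le hw hρ0 hρ1 hcw.le hf)

theorem tsum_pow_mul_sq_tailSum_le (hw : 0 < w) (hρ0 : 0 < ρ) (hρ1 : ρ < 1)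
    (hcw : c ^ 2 < ρ * w) (hf : Summable fun n => w ^ n * f n ^ 2) :
    ∑' m, w ^ m * tailSum c f m ^ 2 ≤
      (1 - ρ)⁻¹ * (1 - c ^ 2 / (ρ * w))⁻¹ * ∑' n, w ^ n * f n ^ 2 := by
  have hq1 : c ^ 2 / (ρ * w) < 1 := (div_lt_one (by positivity)).2 hcw
  have hsum := summable_tsum_geometric_mul_shift (fun n => by positivity) hf (by positivity) hq1
  have hρ : 0 ≤ (1 - ρ)⁻¹ := inv_nonneg.2 (by linarith)
  calc ∑' m, w ^ m * tailSum c f m ^ 2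
      ≤ ∑' m, (1 - ρ)⁻¹ * ∑' k, (c ^ 2 / (ρ * w)) ^ k * (w ^ (m + k) * f (m + k) ^ 2) :=
        Summable.tsum_le_tsum (pow_mul_sq_tailSum_le hw hρ0 hρ1 hcw.le hf)
          (summable_pow_mul_sq_tailSum hw hρ0 hρ1 hcw hf) (hsum.mul_left _)
    _ ≤ (1 - ρ)⁻¹ * ((1 - c ^ 2 / (ρ * w))⁻¹ * ∑' n, w ^ n * f n ^ 2) := by
        rw [tsum_mul_left]
        exact mul_le_mul_of_nonneg_left (tsum_tsum_geometric_mul_shift_le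
          (fun n => by positivity) hf (by positivity) hq1) hρ
    _ = (1 - ρ)⁻¹ * (1 - c ^ 2 / (ρ * w))⁻¹ * ∑' n, w ^ n * f n ^ 2 := by ring

end WeightedTail

lemma tendsto_pow_mul_zero_of_summable_pow_mul_sq {w s : ℝ} {x : ℕ → ℝ} (hsw : s ^ 2 ≤ w)
    (hx : Summable fun n => w ^ n * x n ^ 2) : Tendsto (fun n => s ^ n * x n) atTop (𝓝 0) := by
  have hsqrt : Tendsto (fun n => √(w ^ n * x n ^ 2)) atTop (𝓝 0) := by
    simpa using hx.tendsto_atTop_zero.sqrt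
  refine squeeze_zero_norm (fun n => ?_) hsqrt
  rw [Real.norm_eq_abs, ← Real.sqrt_sq_eq_abs]
  refine Real.sqrt_le_sqrt ?_
  rw [mul_pow, ← pow_mul, mul_comm n 2, pow_mul]
  exact mul_le_mul_of_nonneg_right (pow_le_pow_left₀ (sq_nonneg s) hsw n) (sq_nonneg _)

lemma exists_eq_add_mul_pow_of_recurrence {r : ℝ} {x : ℕ → ℝ} (hr : r ≠ 1)
    (hx : ∀ n, x (n + 2) = (1 + r) * x (n + 1) - r * x n) :
    ∃ A B : ℝ, ∀ n, x n = A + B * r ^ n := by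
  have hr' : r - 1 ≠ 0 := sub_ne_zero.2 hr
  refine ⟨x 0 - (x 1 - x 0) / (r - 1), (x 1 - x 0) / (r - 1), fun n => ?_⟩
  induction n using Nat.twoStepInduction with
  | zero => ring
  | one => field_simp; ring
  | more n h0 h1 => rw [hx, h0, h1]; ring

def recOp (a : ℕ → ℝ) (n : ℕ) : ℝ := 5 * a (n + 2) - 8 * a (n + 1) + 3 * a n

lemma summable_pow_mul_sq_recOp {w : ℝ} {x : ℕ → ℝ} (hw : 1 ≤ w)
    (hx : Summable fun n => w ^ n * x n ^ 2) : Summable fun n => w ^ n * recOp x n ^ 2 := by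
  have hshift (k : ℕ) : Summable fun n => w ^ n * x (n + k) ^ 2 :=
    ((summable_nat_add_iff k).2 hx).of_nonneg_of_le (fun n => by positivity) fun n =>
      mul_le_mul_of_nonneg_right (pow_le_pow_right₀ hw (by omega)) (sq_nonneg _)
  refine ((((hshift 2).mul_left 80).add ((hshift 1).mul_left 128)).add
    ((hshift 0).mul_left 48)).of_nonneg_of_le (fun n => by positivity) fun n => ?_
  -- Cauchy–Schwarz with weights 5, 8, 3
  have hcs : recOp x n ^ 2 ≤ 16 * (5 * x (n + 2) ^ 2 + 8 * x (n + 1) ^ 2 + 3 * x n ^ 2) := by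
    unfold recOp
    nlinarith [sq_nonneg (x (n + 2) + x (n + 1)), sq_nonneg (x (n + 1) - x n),
      sq_nonneg (x (n + 2) - x n)]
  calc w ^ n * recOp x n ^ 2
      ≤ w ^ n * (16 * (5 * x (n + 2) ^ 2 + 8 * x (n + 1) ^ 2 + 3 * x n ^ 2)) :=
        mul_le_mul_of_nonneg_left hcs (by positivity)
    _ = _ := by simp only [add_zero]; ring

noncomputable def partSol (B : ℕ → ℝ) (n : ℕ) : ℝ := tailSum (5 / 3) (tailSum 1 B) n / 3

section PartSol

variable {B : ℕ → ℝ} (hB : Summable fun n => (25 / 3 : ℝ) ^ n * B n ^ 2)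
include hB

lemma summable_tailSum_one : Summable fun n => (25 / 3 : ℝ) ^ n * tailSum 1 B n ^ 2 :=
  summable_pow_mul_sq_tailSum (ρ := 1 / 2) (by norm_num) (by norm_num) (by norm_num)
    (by norm_num) hB

lemma recOp_partSol (n : ℕ) : recOp (partSol B) n = B n := by
  have hE (m : ℕ) : tailSum 1 B m = B m + tailSum 1 B (m + 1) := by
    simpa using tailSum_eq_add (summable_tailSum_terms (ρ := 1 / 2) (c := 1) (by norm_num)
      (by norm_num) (by norm_num) (by norm_num) hB m)
  have hT (m : ℕ) : tailSum (5 / 3) (tailSum 1 B) m =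
      tailSum 1 B m + 5 / 3 * tailSum (5 / 3) (tailSum 1 B) (m + 1) :=
    tailSum_eq_add (summable_tailSum_terms (ρ := 1 / 2) (by norm_num) (by norm_num)
      (by norm_num) (by norm_num) (summable_tailSum_one hB) m)
  unfold recOp partSol
  linear_combination hT n - hT (n + 1) + hE n

lemma summable_partSol : Summable fun n => (25 / 3 : ℝ) ^ n * partSol B n ^ 2 := by
  refine ((summable_pow_mul_sq_tailSum (ρ := 1 / 2) (c := 5 / 3) (by norm_num) (by norm_num)
    (by norm_num) (by norm_num) (summable_tailSum_one hB)).div_const 9).congr fun n => ?_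
  simp only [partSol]
  ring

lemma tsum_partSol_le :
    ∑' n, (25 / 3 : ℝ) ^ n * partSol B n ^ 2 ≤ 100 / 57 * ∑' n, (25 / 3 : ℝ) ^ n * B n ^ 2 := by
  have hE : ∑' n, (25 / 3 : ℝ) ^ n * tailSum 1 B n ^ 2 ≤
      50 / 19 * ∑' n, (25 / 3 : ℝ) ^ n * B n ^ 2 :=
    (tsum_pow_mul_sq_tailSum_le (ρ := 1 / 2) (by norm_num) (by norm_num) (by norm_num)
      (by norm_num) hB).trans_eq (by norm_num)
  have hT : ∑' n, (25 / 3 : ℝ) ^ n * tailSum (5 / 3) (tailSum 1 B) n ^ 2 ≤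
      6 * ∑' n, (25 / 3 : ℝ) ^ n * tailSum 1 B n ^ 2 :=
    (tsum_pow_mul_sq_tailSum_le (ρ := 1 / 2) (by norm_num) (by norm_num) (by norm_num)
      (by norm_num) (summable_tailSum_one hB)).trans_eq (by norm_num)
  calc ∑' n, (25 / 3 : ℝ) ^ n * partSol B n ^ 2
      = (∑' n, (25 / 3 : ℝ) ^ n * tailSum (5 / 3) (tailSum 1 B) n ^ 2) / 9 := by
        rw [← tsum_div_const]
        congr 1 with n
        simp only [partSol]
        ring
    _ ≤ 6 * (50 / 19 * ∑' n, (25 / 3 : ℝ) ^ n * B n ^ 2) / 9 := by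
        gcongr
        linarith
    _ = 100 / 57 * ∑' n, (25 / 3 : ℝ) ^ n * B n ^ 2 := by ring

end PartSol

theorem exists_eq_add_mul_pow_add_partSol {a : ℕ → ℝ}
    (ha : Summable fun n => (25 / 3 : ℝ) ^ n * recOp a n ^ 2) :
    ∃ A₁ A₂ : ℝ, ∀ n, a n = A₁ + A₂ * (3 / 5) ^ n + partSol (recOp a) n := by
  have hhom (n : ℕ) : (a - partSol (recOp a)) (n + 2) =
      (1 + 3 / 5) * (a - partSol (recOp a)) (n + 1) - 3 / 5 * (a - partSol (recOp a)) n := by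
    have h := recOp_partSol ha n
    simp only [recOp, Pi.sub_apply] at h ⊢
    linear_combination -h / 5
  obtain ⟨A₁, A₂, h⟩ := exists_eq_add_mul_pow_of_recurrence (by norm_num) hhom
  exact ⟨A₁, A₂, fun n => by linear_combination (Pi.sub_apply _ _ n).symm.trans (h n)⟩

lemma summable_pow_succ_mul_iff {w : ℝ} {f : ℕ → ℝ} (hw : w ≠ 0) :
    Summable (fun n => w ^ (n + 1) * f n) ↔ Summable fun n => w ^ n * f n := by
  simp_rw [pow_succ', mul_assoc]
  exact summable_mul_left_iff hw

lemma summable_recOp_of_eq_add_mul_pow_add {a a' : ℕ → ℝ} {A₁ A₂ : ℝ}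
    (ha : ∀ m, 1 ≤ m → a m = A₁ + A₂ * (3 / 5) ^ m + a' m)
    (ha' : Summable fun m => (25 / 3 : ℝ) ^ (m + 1) * a' (m + 1) ^ 2) :
    Summable fun m => (25 / 3 : ℝ) ^ (m + 1) * recOp a (m + 1) ^ 2 := by
  have hrec (m : ℕ) : recOp a (m + 1) = recOp (fun n => a' (n + 1)) m := by
    simp only [recOp]
    rw [ha (m + 1 + 2) (by omega), ha (m + 1 + 1) (by omega), ha (m + 1) (by omega)]
    ring
  simp only [hrec]
  rw [summable_pow_succ_mul_iff (by norm_num)] at ha' ⊢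
  exact summable_pow_mul_sq_recOp (by norm_num) ha'

theorem exists_eq_add_mul_pow_add_of_summable_recOp {a : ℕ → ℝ}
    (hS : Summable fun m => (25 / 3 : ℝ) ^ (m + 1) * recOp a (m + 1) ^ 2) :
    ∃ (A₁ A₂ : ℝ) (a' : ℕ → ℝ), (∀ m, 1 ≤ m → a m = A₁ + A₂ * (3 / 5) ^ m + a' m) ∧
      Summable (fun m => (25 / 3 : ℝ) ^ (m + 1) * a' (m + 1) ^ 2) ∧
      ∑' m, (25 / 3 : ℝ) ^ (m + 1) * a' (m + 1) ^ 2 ≤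
        100 / 57 * ∑' m, (25 / 3 : ℝ) ^ (m + 1) * recOp a (m + 1) ^ 2 := by
  -- redefine `a 0` so that `recOp b 0 = 0`; nothing in the claim sees `a 0`
  set b := Function.update a 0 ((8 * a 1 - 5 * a 2) / 3)
  have hba (m : ℕ) : b (m + 1) = a (m + 1) := Function.update_of_ne m.succ_ne_zero _ _
  have hrec (m : ℕ) : recOp b (m + 1) = recOp a (m + 1) := by simp only [recOp, hba]
  have hrec0 : recOp b 0 = 0 := by
    simp only [recOp, b, zero_add, ne_eq, OfNat.ofNat_ne_zero, one_ne_zero, not_false_eq_true,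
      Function.update_of_ne, Function.update_self]
    ring
  have hb : Summable fun n => (25 / 3 : ℝ) ^ n * recOp b n ^ 2 :=
    (summable_nat_add_iff 1).1 (by simpa only [hrec] using hS)
  have hb_tsum : ∑' n, (25 / 3 : ℝ) ^ n * recOp b n ^ 2 =
      ∑' m, (25 / 3 : ℝ) ^ (m + 1) * recOp a (m + 1) ^ 2 := by
    simp [hb.tsum_eq_zero_add, hrec0, hrec]
  obtain ⟨A₁, A₂, hdec⟩ := exists_eq_add_mul_pow_add_partSol hb
  have hx := summable_partSol hb
  refine ⟨A₁, A₂, partSol (recOp b), fun m hm => ?_, (summable_nat_add_iff 1).2 hx, ?_⟩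
  · obtain ⟨m, rfl⟩ := Nat.exists_eq_add_of_le' hm
    rw [← hba, hdec]
  · calc ∑' m, (25 / 3 : ℝ) ^ (m + 1) * partSol (recOp b) (m + 1) ^ 2
        ≤ ∑' n, (25 / 3 : ℝ) ^ n * partSol (recOp b) n ^ 2 := by
          rw [hx.tsum_eq_zero_add]
          exact le_add_of_nonneg_left (by positivity)
      _ ≤ _ := hb_tsum ▸ tsum_partSol_le hb

lemma tendsto_of_eventually_eq_add_mul_pow_add {a x : ℕ → ℝ} {A₁ A₂ : ℝ}
    (ha : ∀ᶠ n in atTop, a n = A₁ + A₂ * (3 / 5) ^ n + x n)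
    (hx : Summable fun n => (25 / 3 : ℝ) ^ n * x n ^ 2) :
    Tendsto a atTop (𝓝 A₁) ∧ Tendsto (fun n => (5 / 3 : ℝ) ^ n * (a n - A₁)) atTop (𝓝 A₂) := by
  have hx₁ : Tendsto x atTop (𝓝 0) := by
    simpa using tendsto_pow_mul_zero_of_summable_pow_mul_sq (s := 1) (by norm_num) hx
  have hx₂ := tendsto_pow_mul_zero_of_summable_pow_mul_sq (s := 5 / 3) (by norm_num) hx
  have hpow := tendsto_pow_atTop_nhds_zero_of_lt_one (r := (3 / 5 : ℝ)) (by norm_num) (by norm_num)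
  constructor
  · refine Tendsto.congr' (ha.mono fun n hn => hn.symm) ?_
    simpa using (tendsto_const_nhds.add (hpow.const_mul A₂)).add hx₁
  · have hlim := (tendsto_const_nhds (x := A₂)).add hx₂
    rw [add_zero] at hlim
    refine hlim.congr' (ha.mono fun n hn => ?_)
    have hinv : (5 / 3 : ℝ) ^ n * (3 / 5) ^ n = 1 := by rw [← mul_pow]; norm_num
    simp only [hn]
    linear_combination -A₂ * hinv

/-- Σ (25/3)^m (5a_{m+2} - 8a_{m+1} + 3a_m)^2 < ∞ iff
a_m = A₁ + A₂ (3/5)^m + a'_m with Σ (25/3)^m (a'_m)^2 < ∞; with an absolute constant C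
controlling the remainder, and A₁ = lim a_m, A₂ = lim (5/3)^m (a_m - A₁). -/
theorem stmt5 :
    ∃ C : ℝ, ∀ a : ℕ → ℝ,
      ((Summable (fun m : ℕ =>
          ((25:ℝ)/3)^(m+1) * (5 * a (m+3) - 8 * a (m+2) + 3 * a (m+1))^2) ↔
        ∃ (A₁ A₂ : ℝ) (a' : ℕ → ℝ),
          (∀ m : ℕ, 1 ≤ m → a m = A₁ + A₂ * ((3:ℝ)/5)^m + a' m) ∧
          Summable (fun m : ℕ => ((25:ℝ)/3)^(m+1) * (a' (m+1))^2)) ∧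
      (Summable (fun m : ℕ =>
          ((25:ℝ)/3)^(m+1) * (5 * a (m+3) - 8 * a (m+2) + 3 * a (m+1))^2) →
        ∃ A₁ A₂ : ℝ,
          Filter.Tendsto a Filter.atTop (nhds A₁) ∧
          Filter.Tendsto (fun m : ℕ => ((5:ℝ)/3)^m * (a m - A₁)) Filter.atTop (nhds A₂) ∧
          Summable (fun m : ℕ =>
            ((25:ℝ)/3)^(m+1) * (a (m+1) - A₁ - A₂ * ((3:ℝ)/5)^(m+1))^2) ∧
          (∑' m : ℕ, ((25:ℝ)/3)^(m+1) * (a (m+1) - A₁ - A₂ * ((3:ℝ)/5)^(m+1))^2) ≤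
            C * ∑' m : ℕ,
              ((25:ℝ)/3)^(m+1) * (5 * a (m+3) - 8 * a (m+2) + 3 * a (m+1))^2)) := by
  refine ⟨100 / 57, fun a => ⟨⟨fun hS => ?_, ?_⟩, fun hS => ?_⟩⟩
  · obtain ⟨A₁, A₂, a', ha, ha', -⟩ := exists_eq_add_mul_pow_add_of_summable_recOp hS
    exact ⟨A₁, A₂, a', ha, ha'⟩
  · rintro ⟨A₁, A₂, a', ha, ha'⟩
    exact summable_recOp_of_eq_add_mul_pow_add ha ha'
  · obtain ⟨A₁, A₂, a', ha, ha', hle⟩ := exists_eq_add_mul_pow_add_of_summable_recOp hS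
    have hrem (m : ℕ) : a (m + 1) - A₁ - A₂ * (3 / 5) ^ (m + 1) = a' (m + 1) := by
      rw [ha (m + 1) m.succ_pos]
      ring
    obtain ⟨hlim₁, hlim₂⟩ := tendsto_of_eventually_eq_add_mul_pow_add
      (eventually_atTop.2 ⟨1, ha⟩) ((summable_nat_add_iff 1).1 ha')
    refine ⟨A₁, A₂, hlim₁, hlim₂, ?_, ?_⟩ <;> simp only [hrem]
    exacts [ha', hle]
end

section
/- Suppose the real sequence (a_m)_{m≥0} converges to 0. Define u_m = 5^{-m}(a_0 - (9/7) Σ_{k=1}^∞ 3^{-k} a_k + (2/7) Σ_{k=1}^m 5^k a_k) + (9/7) Σ_{k=1}^∞ 3^{-k} a_{m+k} for m ≥ 2. Then u_m → 0 as m → ∞. -/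
/-!
Each part of `u_m` is a weighted sum of the `a_k` against a summable geometric weight, so it tends
to `0` by dominated convergence for series (Tannery's theorem): multiplied by `5^{-m}`, the partial
sum `∑_{k ≤ m} 5^k a_k` becomes the convolution `∑_{k ≤ m} 5^{-(m-k)} a_k`, the tail sums are
`∑_k 3^{-(k+1)} a_{m+k+1}`, and the remaining term is a constant times `5^{-m}`.
-/

open Filter Topology Finset

lemma tendsto_tsum_mul_shift_of_tendsto_zero {c a : ℕ → ℝ} (hc : Summable c)
    (ha : Tendsto a atTop (𝓝 0)) :
    Tendsto (fun m => ∑' k, c k * a (m + k)) atTop (𝓝 0) := by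
  obtain ⟨M, hM⟩ := ha.norm.bddAbove_range
  have hlim : ∀ k, Tendsto (fun m => c k * a (m + k)) atTop (𝓝 (c k * 0)) := fun k =>
    (ha.comp (tendsto_add_atTop_nat k)).const_mul (c k)
  have hbound : ∀ m k, ‖c k * a (m + k)‖ ≤ |c k| * M := fun m k => by
    rw [norm_mul, Real.norm_eq_abs]
    exact mul_le_mul_of_nonneg_left (hM ⟨m + k, rfl⟩) (abs_nonneg _)
  simpa using tendsto_tsum_of_dominated_convergence (hc.abs.mul_right M) hlim
    (Eventually.of_forall hbound)

lemma tendsto_sum_range_sub_mul_of_tendsto_zero {c a : ℕ → ℝ} (hc : Summable c)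
    (ha : Tendsto a atTop (𝓝 0)) :
    Tendsto (fun m => ∑ k ∈ range (m + 1), c (m - k) * a k) atTop (𝓝 0) := by
  have hswap : ∀ m, ∑ k ∈ range (m + 1), c k * a (m - k) = ∑ k ∈ range (m + 1), c (m - k) * a k :=
    fun m => by
      rw [← Nat.sum_antidiagonal_eq_sum_range_succ (fun i j => c i * a j),
        ← Nat.sum_antidiagonal_eq_sum_range_succ (fun i j => c j * a i),
        ← Nat.sum_antidiagonal_swap]
      rfl
  obtain ⟨M, hM⟩ := ha.norm.bddAbove_range
  let f : ℕ → ℕ → ℝ := fun m => (range (m + 1) : Set ℕ).indicator fun k => c k * a (m - k)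
  have hlim : ∀ k, Tendsto (f · k) atTop (𝓝 (c k * 0)) := fun k => by
    refine ((ha.comp (tendsto_sub_atTop_nat k)).const_mul (c k)).congr' ?_
    filter_upwards [eventually_ge_atTop k] with m hm
    exact (Set.indicator_of_mem (mem_coe.mpr (mem_range.mpr (Nat.lt_succ_of_le hm)))
      (fun k => c k * a (m - k))).symm
  have hbound : ∀ m k, ‖f m k‖ ≤ |c k| * M := fun m k => by
    refine (norm_indicator_le_norm_self _ _).trans ?_
    rw [norm_mul, Real.norm_eq_abs]
    exact mul_le_mul_of_nonneg_left (hM ⟨m - k, rfl⟩) (abs_nonneg _)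
  have := tendsto_tsum_of_dominated_convergence (hc.abs.mul_right M) hlim
    (Eventually.of_forall hbound)
  simp only [mul_zero, tsum_zero] at this
  exact this.congr fun m => (sum_eq_tsum_indicator _ _).symm.trans (hswap m)

lemma inv_pow_mul_sum_range_pow_mul {x : ℝ} (hx : x ≠ 0) (a : ℕ → ℝ) (m : ℕ) :
    x⁻¹ ^ m * ∑ k ∈ range (m + 1), x ^ k * a k = ∑ k ∈ range (m + 1), x⁻¹ ^ (m - k) * a k := by
  rw [mul_sum]
  refine sum_congr rfl fun k hk => ?_
  rw [pow_sub₀ _ (inv_ne_zero hx) (Nat.lt_succ_iff.mp (mem_range.mp hk)), inv_pow, inv_pow,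
    inv_inv, mul_assoc]

lemma sum_Icc_one_eq_sum_range_sub {M : Type*} [AddCommGroup M] (f : ℕ → M) (m : ℕ) :
    ∑ k ∈ Icc 1 m, f k = ∑ k ∈ range (m + 1), f k - f 0 := by
  rw [Nat.range_succ_eq_Icc_zero, ← sum_Ioc_add_eq_sum_Icc m.zero_le, add_sub_cancel_right]
  rfl

/-- if a_m → 0 then the explicit solution values u(y_m) tend to 0. -/
theorem stmt9 (a : ℕ → ℝ) (ha : Filter.Tendsto a Filter.atTop (nhds 0)) :
    Filter.Tendsto (fun m : ℕ =>
      ((1:ℝ)/5)^m * (a 0 - (9/7) * (∑' k : ℕ, ((1:ℝ)/3)^(k+1) * a (k+1))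
        + (2/7) * ∑ k ∈ Finset.Icc 1 m, (5:ℝ)^k * a k)
      + (9/7) * ∑' k : ℕ, ((1:ℝ)/3)^(k+1) * a (m + (k+1)))
      Filter.atTop (nhds 0) := by
  set S := ∑' k : ℕ, ((1:ℝ)/3)^(k+1) * a (k+1)
  have hgeo : Tendsto (fun m : ℕ => ((1:ℝ)/5)^m) atTop (𝓝 0) :=
    tendsto_pow_atTop_nhds_zero_of_lt_one (by norm_num) (by norm_num)
  have hconv : Tendsto (fun m => ∑ k ∈ range (m + 1), ((1:ℝ)/5)^(m - k) * a k) atTop (𝓝 0) :=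
    tendsto_sum_range_sub_mul_of_tendsto_zero
      (summable_geometric_of_lt_one (by norm_num) (by norm_num)) ha
  have htail : Tendsto (fun m => ∑' k : ℕ, ((1:ℝ)/3)^(k+1) * a (m + (k+1))) atTop (𝓝 0) :=
    tendsto_tsum_mul_shift_of_tendsto_zero
      ((summable_nat_add_iff 1).mpr (summable_geometric_of_lt_one (by norm_num) (by norm_num)))
      (ha.comp (tendsto_add_atTop_nat 1))
  have hsplit : ∀ m, ((1:ℝ)/5)^m * ∑ k ∈ Icc 1 m, (5:ℝ)^k * a k
      = ∑ k ∈ range (m + 1), ((1:ℝ)/5)^(m - k) * a k - ((1:ℝ)/5)^m * a 0 := fun m => by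
    rw [sum_Icc_one_eq_sum_range_sub, one_div, mul_sub,
      inv_pow_mul_sum_range_pow_mul (by norm_num : (5:ℝ) ≠ 0), pow_zero, one_mul]
  have := ((hgeo.mul_const (5/7 * a 0 - 9/7 * S)).add (hconv.const_mul (2/7))).add
    (htail.const_mul (9/7))
  simp only [zero_mul, mul_zero, add_zero] at this
  exact this.congr fun m => by linear_combination (-(2/7):ℝ) * hsplit m
end

section
/- Suppose the sequence (u_m)_{m≥1} defined by u_m = 5^{-m}(a_0 - (9/7) Σ_{k=1}^∞ 3^{-k} a_k + (2/7) Σ_{k=1}^m 5^k a_k) + (9/7) Σ_{k=1}^∞ 3^{-k} a_{m+k}, where (a_m)_{m≥0} is a bounded real sequence, satisfies for all m ≥ 2 the recurrence u_m = (16/5) u_{m-1} - (3/5) u_{m-2} - a_m - (3/5) a_{m-1}, where u_0 := a_0. -/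
/-!
The characteristic polynomial of the recurrence is `x² - (16/5) x + 3/5 = (x - 1/5) (x - 3)`.
Split `u_m = v_m + w_m` with `v_m = 5^{-m} (c + (2/7) Σ_{k=1}^m 5^k a_k)` and
`w_m = (9/7) Σ_{k ≥ 1} 3^{-k} a_{m+k}`. Each piece solves a first-order recurrence,
`v_{m+1} = v_m / 5 + (2/7) a_{m+1}` and `w_{m+1} = 3 w_m - (9/7) a_{m+1}`, and composing the two
first-order operators gives the second-order recurrence. The recurrence for `w` is a one-step
shift of the tail series, which needs the boundedness of `a` for convergence.
-/

open Finset

noncomputable def geomTail (r : ℝ) (a : ℕ → ℝ) (m : ℕ) : ℝ :=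
  ∑' k : ℕ, r ^ (k + 1) * a (m + (k + 1))

lemma summable_pow_mul_of_abs_le {r C : ℝ} {b : ℕ → ℝ} (hr : |r| < 1) (hb : ∀ n, |b n| ≤ C) :
    Summable fun k => r ^ k * b k := by
  refine Summable.of_norm_bounded
    ((summable_geometric_of_lt_one (abs_nonneg r) hr).mul_left C) fun k => ?_
  rw [Real.norm_eq_abs, abs_mul, abs_pow, mul_comm C]
  exact mul_le_mul_of_nonneg_left (hb k) (by positivity)

lemma summable_geomTail_terms {r C : ℝ} {a : ℕ → ℝ} (hr : |r| < 1) (ha : ∀ n, |a n| ≤ C)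
    (m : ℕ) : Summable fun k => r ^ (k + 1) * a (m + (k + 1)) :=
  (summable_nat_add_iff 1).mpr
    (summable_pow_mul_of_abs_le (b := fun k => a (m + k)) hr fun n => ha (m + n))

lemma geomTail_eq {r : ℝ} {a : ℕ → ℝ} {m : ℕ}
    (hs : Summable fun k => r ^ (k + 1) * a (m + (k + 1))) :
    geomTail r a m = r * (a (m + 1) + geomTail r a (m + 1)) := by
  have hshift : ∀ k : ℕ, r ^ (k + 1 + 1) * a (m + (k + 1 + 1))
      = r * (r ^ (k + 1) * a (m + 1 + (k + 1))) := fun k => by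
    rw [show m + (k + 1 + 1) = m + 1 + (k + 1) by omega]; ring
  rw [geomTail, hs.tsum_eq_zero_add]
  simp only [hshift, tsum_mul_left]
  simp only [zero_add, pow_one, geomTail]
  ring

lemma recurrence_of_first_order {a v w : ℕ → ℝ}
    (hv : ∀ m, v (m + 1) = v m / 5 + (2 / 7) * a (m + 1))
    (hw : ∀ m, w (m + 1) = 3 * w m - (9 / 7) * a (m + 1)) (m : ℕ) :
    v (m + 2) + w (m + 2)
      = (16 / 5) * (v (m + 1) + w (m + 1)) - (3 / 5) * (v m + w m) - a (m + 2)
        - (3 / 5) * a (m + 1) := by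
  rw [hv (m + 1), hw (m + 1), hv m, hw m]
  ring

lemma scaled_partial_sum_succ (a : ℕ → ℝ) (c : ℝ) (m : ℕ) :
    (1 / 5 : ℝ) ^ (m + 1) * (c + (2 / 7) * ∑ k ∈ Icc 1 (m + 1), (5 : ℝ) ^ k * a k)
      = (1 / 5 : ℝ) ^ m * (c + (2 / 7) * ∑ k ∈ Icc 1 m, (5 : ℝ) ^ k * a k) / 5
        + (2 / 7) * a (m + 1) := by
  rw [sum_Icc_succ_top (by omega), one_div, inv_pow, inv_pow]
  field_simp
  ring

/-- the explicit formula for u_m satisfies the half-gasket recurrence. -/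
theorem stmt10 (a u : ℕ → ℝ) (hb : ∃ C : ℝ, ∀ m : ℕ, |a m| ≤ C)
    (hu0 : u 0 = a 0)
    (hu : ∀ m : ℕ, 1 ≤ m →
      u m = ((1:ℝ)/5)^m * (a 0 - (9/7) * (∑' k : ℕ, ((1:ℝ)/3)^(k+1) * a (k+1))
          + (2/7) * ∑ k ∈ Finset.Icc 1 m, (5:ℝ)^k * a k)
        + (9/7) * ∑' k : ℕ, ((1:ℝ)/3)^(k+1) * a (m + (k+1))) :
    ∀ m : ℕ, 2 ≤ m →
      u m = (16/5) * u (m-1) - (3/5) * u (m-2) - a m - (3/5) * a (m-1) := by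
  obtain ⟨C, hC⟩ := hb
  set c := a 0 - (9 / 7) * ∑' k : ℕ, ((1 : ℝ) / 3) ^ (k + 1) * a (k + 1)
  set v : ℕ → ℝ := fun m => (1 / 5 : ℝ) ^ m * (c + (2 / 7) * ∑ k ∈ Icc 1 m, (5 : ℝ) ^ k * a k)
  set w : ℕ → ℝ := fun m => (9 / 7) * geomTail (1 / 3) a m
  have hsplit : ∀ m, u m = v m + w m := by
    rintro (_ | m)
    · simp [hu0, v, w, c, geomTail]
    · exact hu (m + 1) (by omega)
  have hw : ∀ m, w (m + 1) = 3 * w m - (9 / 7) * a (m + 1) := fun m => by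
    have := geomTail_eq (summable_geomTail_terms (r := 1 / 3) (by norm_num [abs_of_pos]) hC m)
    simp only [w, this]
    ring
  rintro m hm
  obtain ⟨n, rfl⟩ : ∃ n, m = n + 2 := ⟨m - 2, by omega⟩
  simp only [Nat.add_sub_cancel, show n + 2 - 1 = n + 1 by omega, hsplit]
  exact recurrence_of_first_order (scaled_partial_sum_succ a c) hw n
end

section
/- With b_m = 5^m (30/7) Σ_{k=m+1}^∞ 3^{-k} a_k - 3^{-m} (12/7) Σ_{k=1}^m 5^k a_k and c_m = (3/5)^{m+1} b_m, for every bounded real sequence (a_m) and every m ≥ 1 one has the identity 35 c_{m+2} - 112 c_{m+1} + 21 c_m = -126 (a_{m+2} - a_{m+1}). -/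
lemma stmt12_summable (a : ℕ → ℝ) (C : ℝ) (hC : ∀ m : ℕ, |a m| ≤ C) (n : ℕ) :
    Summable fun k : ℕ => ((1:ℝ)/3)^(n+k+1) * a (n+k+1) := by
  have hC0 : 0 ≤ C := le_trans (abs_nonneg _) (hC 0)
  apply Summable.of_norm
  have hg : Summable fun k : ℕ => (C * ((1:ℝ)/3)^(n+1)) * ((1:ℝ)/3)^k :=
    (summable_geometric_of_lt_one (by norm_num) (by norm_num)).mul_left _
  apply hg.of_nonneg_of_le (fun k => norm_nonneg _)
  intro k
  have h1 : ‖((1:ℝ)/3)^(n+k+1) * a (n+k+1)‖ = ((1:ℝ)/3)^(n+k+1) * |a (n+k+1)| := by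
    rw [norm_mul, Real.norm_eq_abs, Real.norm_eq_abs, abs_pow]
    norm_num
  rw [h1]
  have h2 : ((1:ℝ)/3)^(n+k+1) = ((1:ℝ)/3)^(n+1) * ((1:ℝ)/3)^k := by
    rw [← pow_add]; ring_nf
  rw [h2]
  have hp : 0 ≤ ((1:ℝ)/3)^(n+1) * ((1:ℝ)/3)^k := by positivity
  nlinarith [mul_le_mul_of_nonneg_left (hC (n+k+1)) hp]

lemma stmt12_key (a : ℕ → ℝ) (C : ℝ) (hC : ∀ m : ℕ, |a m| ≤ C) (n : ℕ) :
    (∑' k : ℕ, ((1:ℝ)/3)^(n+k+1) * a (n+k+1)) =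
      ((1:ℝ)/3)^(n+1) * a (n+1) +
        ∑' k : ℕ, ((1:ℝ)/3)^((n+1)+k+1) * a ((n+1)+k+1) := by
  rw [Summable.tsum_eq_zero_add (stmt12_summable a C hC n)]
  congr 1
  exact tsum_congr fun k => by rw [show n + (k+1) + 1 = (n+1)+k+1 by omega]

/-- with c_m = (3/5)^{m+1} b_m, the identity
35 c_{m+2} - 112 c_{m+1} + 21 c_m = -126 (a_{m+2} - a_{m+1}) holds. -/
theorem stmt12 (a : ℕ → ℝ) (hb : ∃ C : ℝ, ∀ m : ℕ, |a m| ≤ C) :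
    ∀ m : ℕ, 1 ≤ m →
      (fun c : ℕ → ℝ =>
        35 * c (m+2) - 112 * c (m+1) + 21 * c m = -126 * (a (m+2) - a (m+1)))
      (fun n : ℕ => ((3:ℝ)/5)^(n+1) *
        ((5:ℝ)^n * (30/7) * (∑' k : ℕ, ((1:ℝ)/3)^(n+k+1) * a (n+k+1))
          - ((1:ℝ)/3)^n * (12/7) * ∑ k ∈ Finset.Icc 1 n, (5:ℝ)^k * a k)) := by
  obtain ⟨C, hC⟩ := hb
  intro m _
  simp only []
  rw [stmt12_key a C hC m, stmt12_key a C hC (m+1),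
    Finset.sum_Icc_succ_top (by omega : 1 ≤ m+2),
    Finset.sum_Icc_succ_top (by omega : 1 ≤ m+1)]
  generalize (∑' k : ℕ, ((1:ℝ)/3)^((m+1+1)+k+1) * a ((m+1+1)+k+1)) = T
  generalize (∑ k ∈ Finset.Icc 1 m, (5:ℝ)^k * a k) = S
  have h1 : ((1:ℝ)/3)^m * ((3:ℝ)/5)^m * (5:ℝ)^m = 1 := by
    rw [← mul_pow, ← mul_pow]; norm_num
  linear_combination (126 * a (m+1) - 126 * a (m+2)) * h1
end

section
/- Fix a convergent real sequence (a_m)_{m≥0} with limit A, and a real sequence (u_m)_{m≥0} with u_0 = a_0. Define E = Σ_{m=1}^∞ (5/3)^m [(u_m - u_{m-1})^2 + (u_m - a_m)^2 + (u_{m-1} - a_m)^2]. Then E ≥ (5/8) Σ_{m=1}^∞ (5/3)^m (a_{m+1} - a_m)^2 + (5/3)(a_1 - a_0)^2. -/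
open scoped ENNReal

/-!
Split each energy term into its two boundary parts, `(u_m - a_m)^2` and `(u_{m-1} - a_m)^2`
(dropping the nonnegative `(u_m - u_{m-1})^2`), and regroup them by the value of `u`: the part
involving `u_0 = a_0` alone gives `(5/3)(a_1 - a_0)^2`, and for `m ≥ 1` the two parts involving
`u_m` are `(5/3)^m [(u_m - a_m)^2 + (5/3)(u_m - a_{m+1})^2] ≥ (5/3)^m (5/8)(a_{m+1} - a_m)^2`,
minimising over `u_m`. Regrouping is harmless since all series have values in `[0, ∞]`.
-/

/-- Minimising `p (u - x)^2 + q (u - y)^2` over `u`: the minimum `pq/(p+q) (x - y)^2` is attained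
at the weighted mean `u = (p x + q y)/(p + q)`. -/
theorem mul_div_add_mul_sq_sub_le {p q : ℝ} (hpq : 0 < p + q)
    (x y u : ℝ) : p * q / (p + q) * (x - y) ^ 2 ≤ p * (u - x) ^ 2 + q * (u - y) ^ 2 := by
  have hsq : p * (u - x) ^ 2 + q * (u - y) ^ 2 - p * q / (p + q) * (x - y) ^ 2 =
      (p + q) * (u - (p * x + q * y) / (p + q)) ^ 2 := by
    field_simp
    ring
  nlinarith [mul_nonneg hpq.le (sq_nonneg (u - (p * x + q * y) / (p + q)))]

theorem ENNReal.tsum_add_le_tsum_add_of_le_add_succ {f P Q : ℕ → ℝ≥0∞}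
    (h : ∀ k, f k ≤ P k + Q (k + 1)) : ∑' k, f k + Q 0 ≤ ∑' k, (P k + Q k) :=
  calc ∑' k, f k + Q 0 ≤ ∑' k, (P k + Q (k + 1)) + Q 0 := by gcongr with k; exact h k
    _ = ∑' k, P k + (Q 0 + ∑' k, Q (k + 1)) := by rw [ENNReal.tsum_add, add_assoc, add_comm (Q 0)]
    _ = ∑' k, (P k + Q k) := by rw [← tsum_eq_zero_add' ENNReal.summable, ENNReal.tsum_add]

theorem stmt13_general (a u : ℕ → ℝ) (h0 : u 0 = a 0) :
    (∑' m : ℕ, ENNReal.ofReal (((5:ℝ)/3)^(m+1) *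
        ((u (m+1) - u m)^2 + (u (m+1) - a (m+1))^2 + (u m - a (m+1))^2))) ≥
      ENNReal.ofReal ((5:ℝ)/8) *
        (∑' m : ℕ, ENNReal.ofReal (((5:ℝ)/3)^(m+1) * (a (m+2) - a (m+1))^2)) +
      ENNReal.ofReal (((5:ℝ)/3) * (a 1 - a 0)^2) := by
  let w : ℕ → ℝ := fun m => ((5:ℝ)/3) ^ (m + 1)
  have hw : ∀ m, 0 ≤ w m := fun m => by positivity
  let P : ℕ → ℝ≥0∞ := fun m => ENNReal.ofReal (w m * (u (m+1) - a (m+1))^2)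
  let Q : ℕ → ℝ≥0∞ := fun m => ENNReal.ofReal (w m * (u m - a (m+1))^2)
  have hQ0 : Q 0 = ENNReal.ofReal (((5:ℝ)/3) * (a 1 - a 0)^2) := by
    simp only [Q, w, zero_add, pow_one, h0, ← neg_sub (a 1), neg_sq]
  have hsplit : ∀ m, P m + Q m ≤ ENNReal.ofReal (w m *
      ((u (m+1) - u m)^2 + (u (m+1) - a (m+1))^2 + (u m - a (m+1))^2)) := fun m => by
    rw [← ENNReal.ofReal_add (by positivity) (by positivity)]
    exact ENNReal.ofReal_le_ofReal (by nlinarith [mul_nonneg (hw m) (sq_nonneg (u (m+1) - u m))])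
  have hmin : ∀ k, ENNReal.ofReal ((5:ℝ)/8) * ENNReal.ofReal (w k * (a (k+2) - a (k+1))^2) ≤
      P k + Q (k + 1) := fun k => by
    rw [← ENNReal.ofReal_mul (by norm_num), ← ENNReal.ofReal_add (by positivity) (by positivity)]
    refine ENNReal.ofReal_le_ofReal ?_
    have h := mul_div_add_mul_sq_sub_le (p := 1) (q := 5/3) (by norm_num)
      (a (k+1)) (a (k+2)) (u (k+1))
    have hwk : w (k + 1) = w k * (5/3) := pow_succ _ _
    rw [hwk]
    nlinarith [mul_le_mul_of_nonneg_left h (hw k)]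
  rw [← hQ0, ← ENNReal.tsum_mul_left]
  exact (ENNReal.tsum_add_le_tsum_add_of_le_add_succ hmin).trans (ENNReal.tsum_le_tsum hsplit)

/-- lower bound for the energy of a piecewise harmonic function with
boundary data (a_m), in [0,∞]. -/
theorem stmt13 (a u : ℕ → ℝ) (A : ℝ)
    (ha : Filter.Tendsto a Filter.atTop (nhds A)) (h0 : u 0 = a 0) :
    (∑' m : ℕ, ENNReal.ofReal (((5:ℝ)/3)^(m+1) *
        ((u (m+1) - u m)^2 + (u (m+1) - a (m+1))^2 + (u m - a (m+1))^2))) ≥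
      ENNReal.ofReal ((5:ℝ)/8) *
        (∑' m : ℕ, ENNReal.ofReal (((5:ℝ)/3)^(m+1) * (a (m+2) - a (m+1))^2)) +
      ENNReal.ofReal (((5:ℝ)/3) * (a 1 - a 0)^2) :=
  stmt13_general a u h0
end

section
/- Let A be a real number and (a_m)_{m≥1} a sequence with a_m → A. Then Σ_{m=1}^∞ (5/3)^m (a_m - A)^2 < ∞ if and only if Σ_{m=1}^∞ (5/3)^m (a_{m+1} - a_m)^2 < ∞. -/
/-!
Write `e m = a m - A` and `d m = a (m + 1) - a m`. One direction is
`d m ^ 2 ≤ 2 e (m + 1) ^ 2 + 2 e m ^ 2`. Conversely, `r ^ m * d m ^ 2` is bounded, so the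
increments decay geometrically and `r ^ m * e m ^ 2` is bounded. Since `e m = e (m + 1) - d m`,
a weighted AM-GM step gives `r ^ m e m ^ 2 ≤ q r ^ (m + 1) e (m + 1) ^ 2 + C r ^ m d m ^ 2`
with `q < 1`; summing and absorbing the `q`-term bounds the partial sums of `r ^ m e m ^ 2`.
-/

open Filter Finset Topology

lemma sq_sub_le_mul_sq_add_mul_sq (u v : ℝ) {t : ℝ} (ht : 1 < t) :
    (u - v) ^ 2 ≤ t * u ^ 2 + t / (t - 1) * v ^ 2 := by
  have ht' : 0 < t - 1 := sub_pos.2 ht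
  have key : 0 ≤ ((t - 1) * u + v) ^ 2 / (t - 1) := by positivity
  have expand : t * u ^ 2 + t / (t - 1) * v ^ 2 - (u - v) ^ 2
      = ((t - 1) * u + v) ^ 2 / (t - 1) := by
    field_simp
    ring
  linarith

lemma summable_of_le_mul_succ_add {x y : ℕ → ℝ} {q B : ℝ} (hx : ∀ n, 0 ≤ x n)
    (hB : ∀ n, x n ≤ B) (hq₀ : 0 ≤ q) (hq₁ : q < 1) (hy₀ : ∀ n, 0 ≤ y n) (hy : Summable y)
    (hxy : ∀ n, x n ≤ q * x (n + 1) + y n) : Summable x := by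
  refine summable_of_sum_range_le (c := (q * B + ∑' n, y n) / (1 - q)) hx fun M => ?_
  have hshift : ∑ n ∈ range M, x (n + 1) = ∑ n ∈ range M, x n + x M - x 0 := by
    rw [← sum_range_succ, sum_range_succ']
    ring
  have hstep : ∑ n ∈ range M, x n ≤ q * ∑ n ∈ range M, x (n + 1) + ∑' n, y n := by
    calc ∑ n ∈ range M, x n ≤ ∑ n ∈ range M, (q * x (n + 1) + y n) := sum_le_sum fun n _ => hxy n
      _ = q * ∑ n ∈ range M, x (n + 1) + ∑ n ∈ range M, y n := by
        rw [sum_add_distrib, mul_sum]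
      _ ≤ _ := by gcongr; exact hy.sum_le_tsum _ fun n _ => hy₀ n
  rw [le_div_iff₀ (sub_pos.2 hq₁)]
  nlinarith [hx 0, hB M]

lemma exists_pow_mul_sq_sub_le {a : ℕ → ℝ} {A r : ℝ} (hr : 1 < r)
    (ha : Tendsto a atTop (𝓝 A)) (hd : Summable fun m => r ^ m * (a (m + 1) - a m) ^ 2) :
    ∃ B, ∀ m, r ^ m * (a m - A) ^ 2 ≤ B := by
  set s := √r
  have hs : 1 < s := Real.lt_sqrt_of_sq_lt (by simpa using hr)
  have hs₀ : 0 < s := by linarith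
  have hrs : ∀ m : ℕ, r ^ m = (s ^ m) ^ 2 := fun m => by
    rw [← pow_mul, mul_comm, pow_mul, Real.sq_sqrt (by linarith)]
  set Y := ∑' m, r ^ m * (a (m + 1) - a m) ^ 2
  have hstep : ∀ m, dist (a m) (a (m + 1)) ≤ √Y * s⁻¹ ^ m := fun m => by
    have hle : (s ^ m * |a (m + 1) - a m|) ^ 2 ≤ Y := by
      rw [mul_pow, sq_abs, ← hrs]
      exact hd.le_tsum m fun j _ => by positivity
    have := Real.le_sqrt_of_sq_le hle
    rw [Real.dist_eq, abs_sub_comm, inv_pow, ← div_eq_mul_inv, le_div_iff₀ (by positivity)]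
    linarith
  refine ⟨(√Y / (1 - s⁻¹)) ^ 2, fun m => ?_⟩
  have hlim := dist_le_of_le_geometric_of_tendsto _ _ (inv_lt_one_of_one_lt₀ hs) hstep ha m
  rw [Real.dist_eq, inv_pow, mul_div_right_comm, ← div_eq_mul_inv,
    le_div_iff₀ (by positivity)] at hlim
  rw [hrs, ← mul_pow, ← sq_abs, abs_mul, abs_of_pos (by positivity), mul_comm]
  exact pow_le_pow_left₀ (by positivity) hlim 2

lemma summable_pow_mul_sq_sub_succ_of_summable {e : ℕ → ℝ} {r : ℝ} (hr : 0 < r)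
    (he : Summable fun m => r ^ m * e m ^ 2) :
    Summable fun m => r ^ m * (e (m + 1) - e m) ^ 2 := by
  have he' : Summable fun m => r ^ (m + 1) * e (m + 1) ^ 2 := (summable_nat_add_iff 1).2 he
  refine .of_nonneg_of_le (fun m => by positivity) (fun m => ?_)
    ((he'.mul_left (2 / r)).add (he.mul_left 2))
  have hsq : (e (m + 1) - e m) ^ 2 ≤ 2 * e (m + 1) ^ 2 + 2 * e m ^ 2 := by
    nlinarith [sq_nonneg (e (m + 1) + e m)]
  calc r ^ m * (e (m + 1) - e m) ^ 2 ≤ r ^ m * (2 * e (m + 1) ^ 2 + 2 * e m ^ 2) := by gcongr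
    _ = 2 / r * (r ^ (m + 1) * e (m + 1) ^ 2) + 2 * (r ^ m * e m ^ 2) := by
      field_simp
      ring

theorem summable_pow_mul_sq_sub_lim_iff {a : ℕ → ℝ} {A r : ℝ} (hr : 1 < r)
    (ha : Tendsto a atTop (𝓝 A)) :
    Summable (fun m => r ^ m * (a m - A) ^ 2) ↔
      Summable (fun m => r ^ m * (a (m + 1) - a m) ^ 2) := by
  refine ⟨fun h => by simpa using summable_pow_mul_sq_sub_succ_of_summable (by linarith) h,
    fun hd => ?_⟩
  obtain ⟨B, hB⟩ := exists_pow_mul_sq_sub_le hr ha hd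
  set t := (1 + r) / 2
  have ht : 1 < t := by simp only [t]; linarith
  refine summable_of_le_mul_succ_add (q := t / r) (fun m => by positivity) hB (by positivity)
    ((div_lt_one (by linarith)).2 (by simp only [t]; linarith)) (fun m => by positivity)
    (hd.mul_left (t / (t - 1))) fun m => ?_
  have h := sq_sub_le_mul_sq_add_mul_sq (a (m + 1) - A) (a (m + 1) - a m) ht
  rw [sub_sub_sub_cancel_left] at h
  calc r ^ m * (a m - A) ^ 2
      ≤ r ^ m * (t * (a (m + 1) - A) ^ 2 + t / (t - 1) * (a (m + 1) - a m) ^ 2) := by gcongr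
    _ = t / r * (r ^ (m + 1) * (a (m + 1) - A) ^ 2)
        + t / (t - 1) * (r ^ m * (a (m + 1) - a m) ^ 2) := by
      field_simp
      ring

/-- for a_m → A, Σ (5/3)^m (a_m - A)^2 < ∞ iff
Σ (5/3)^m (a_{m+1} - a_m)^2 < ∞. -/
theorem stmt15 (a : ℕ → ℝ) (A : ℝ) (ha : Filter.Tendsto a Filter.atTop (nhds A)) :
    Summable (fun m : ℕ => ((5:ℝ)/3)^(m+1) * (a (m+1) - A)^2) ↔
    Summable (fun m : ℕ => ((5:ℝ)/3)^(m+1) * (a (m+2) - a (m+1))^2) := by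
  have h := summable_pow_mul_sq_sub_lim_iff (r := 5 / 3) (by norm_num)
    (ha.comp (tendsto_add_atTop_nat 1))
  simp only [Function.comp_apply] at h
  simp only [pow_succ, mul_right_comm _ (5 / 3 : ℝ)]
  rwa [summable_mul_right_iff (by norm_num), summable_mul_right_iff (by norm_num)]
end
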